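/- arXiv:2503.08921 — 3 statements merged into one kernel-verified Lean document; each statement's English description precedes it below -/
import Mathlib

section
/- Let φ = f - g with f, g convex on a convex compact set D, and suppose a sequence x_0, x_1, ... in D satisfies, for each t, that x_{t+1} approximately minimizes the surrogate φ̂_t(x) = f(x) - g(x_t) - ⟨u_t, x - x_t⟩ (with u_t ∈ ∂g(x_t)) up to additive error ε/2. Then for every t ≥ 0, min_{0 ≤ τ ≤ t} gap_DC(x_τ) ≤ (φ(x_0) - φ(x_⋆))/(t+1) + ε/2, where x_⋆ is any minimizer of φ on D. -/
open scoped RealInnerProductSpace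

def subdiff {d : ℕ} (D : Set (EuclideanSpace ℝ (Fin d)))
    (g : EuclideanSpace ℝ (Fin d) → ℝ) (x : EuclideanSpace ℝ (Fin d)) :
    Set (EuclideanSpace ℝ (Fin d)) :=
  {u | ∀ y ∈ D, g x + ⟪u, y - x⟫ ≤ g y}

noncomputable def gapDC {d : ℕ} (D : Set (EuclideanSpace ℝ (Fin d)))
    (f g : EuclideanSpace ℝ (Fin d) → ℝ) (x : EuclideanSpace ℝ (Fin d)) : ℝ :=
  sSup ((fun y => sInf ((fun u => (f x - f y - ⟪u, x - y⟫)) '' (subdiff D g x))) '' D)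

theorem inexact_dca_convergence {d : ℕ} (D : Set (EuclideanSpace ℝ (Fin d)))
    (hDconv : Convex ℝ D) (hDcpt : IsCompact D)
    (f g : EuclideanSpace ℝ (Fin d) → ℝ)
    (hf : ConvexOn ℝ D f) (hg : ConvexOn ℝ D g)
    (ε : ℝ) (hε : 0 < ε)
    (x : ℕ → EuclideanSpace ℝ (Fin d)) (hxD : ∀ t, x t ∈ D)
    (u : ℕ → EuclideanSpace ℝ (Fin d)) (hu : ∀ t, u t ∈ subdiff D g (x t))
    -- inexactness: `x (t+1)` minimizes the surrogate up to additive error `ε/2`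
    (hinexact : ∀ t, ∀ y ∈ D,
      f (x (t + 1)) - g (x t) - ⟪u t, x (t + 1) - x t⟫ ≤
        f y - g (x t) - ⟪u t, y - x t⟫ + ε / 2)
    (xstar : EuclideanSpace ℝ (Fin d)) (hxstar : xstar ∈ D)
    (hmin : ∀ y ∈ D, f xstar - g xstar ≤ f y - g y)
    (t : ℕ) :
    ∃ τ ≤ t, gapDC D f g (x τ) ≤
      ((f (x 0) - g (x 0)) - (f xstar - g xstar)) / (t + 1) + ε / 2 := by
  set φ : ℕ → ℝ := fun τ => f (x τ) - g (x τ) with hφ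
  set G : ℕ → ℝ := fun τ => φ τ - φ (τ + 1) + ε / 2 with hG
  -- nonnegativity of G
  have hG0 : ∀ τ, 0 ≤ G τ := by
    intro τ
    have h1 := hinexact τ (x τ) (hxD τ)
    have h2 := hu τ (x (τ + 1)) (hxD (τ + 1))
    simp only [sub_self, inner_zero_right] at h1
    simp only [hG, hφ]
    linarith
  -- key per-point bound
  have hkey : ∀ τ, ∀ y ∈ D, f (x τ) - f y - ⟪u τ, x τ - y⟫ ≤ G τ := by
    intro τ y hy
    have h1 := hinexact τ y hy
    have h2 := hu τ (x (τ + 1)) (hxD (τ + 1))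
    simp only [inner_sub_right] at h1 h2 ⊢
    simp only [hG, hφ]
    linarith
  -- gapDC bound
  have hgap : ∀ τ, gapDC D f g (x τ) ≤ G τ := by
    intro τ
    unfold gapDC
    refine Real.sSup_le (fun z hz => ?_) (hG0 τ)
    obtain ⟨y, hy, rfl⟩ := hz
    by_cases hb : BddBelow ((fun v => f (x τ) - f y - ⟪v, x τ - y⟫) '' subdiff D g (x τ))
    · exact (csInf_le hb ⟨u τ, hu τ, rfl⟩).trans (hkey τ y hy)
    · exact (Real.sInf_of_not_bddBelow hb).trans_le (hG0 τ)
  -- sum of G telescopes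
  have hsum : ∑ τ ∈ Finset.range (t + 1), G τ = φ 0 - φ (t + 1) + (t + 1) * (ε / 2) := by
    simp only [hG, Finset.sum_add_distrib, Finset.sum_range_sub' φ, Finset.sum_const,
      Finset.card_range, nsmul_eq_mul]
    push_cast
    ring
  have htpos : (0 : ℝ) < (t : ℝ) + 1 := by positivity
  set A : ℝ := ((f (x 0) - g (x 0)) - (f xstar - g xstar)) / (t + 1) + ε / 2 with hA
  have hsumle : ∑ τ ∈ Finset.range (t + 1), G τ ≤ ∑ τ ∈ Finset.range (t + 1), A := by
    rw [hsum, Finset.sum_const, Finset.card_range, nsmul_eq_mul, hA]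
    have hstar := hmin (x (t + 1)) (hxD (t + 1))
    have : ((t : ℝ) + 1) * (((f (x 0) - g (x 0)) - (f xstar - g xstar)) / ((t : ℝ) + 1))
        = (f (x 0) - g (x 0)) - (f xstar - g xstar) := by
      field_simp
    push_cast
    rw [mul_add, this]
    simp only [hφ]
    linarith
  obtain ⟨τ, hτ, hle⟩ := Finset.exists_le_of_sum_le (Finset.nonempty_range_add_one) hsumle
  exact ⟨τ, Nat.lt_succ_iff.mp (Finset.mem_range.mp hτ), (hgap τ).trans hle⟩
end

section
/- Under the hypotheses of the inexact DCA convergence theorem, for each iteration t one has the single-step inequality gap_DC(x_t) ≤ (f(x_t) - g(x_t)) - (f(x_{t+1}) - g(x_{t+1})) + ε/2. -/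
open scoped RealInnerProductSpace

theorem inexact_dca_single_step {d : ℕ} (D : Set (EuclideanSpace ℝ (Fin d)))
    (hDconv : Convex ℝ D) (hDcpt : IsCompact D)
    (f g : EuclideanSpace ℝ (Fin d) → ℝ)
    (hf : ConvexOn ℝ D f) (hg : ConvexOn ℝ D g)
    (ε : ℝ) (hε : 0 < ε)
    (xt xt1 : EuclideanSpace ℝ (Fin d)) (hxt : xt ∈ D) (hxt1 : xt1 ∈ D)
    (ut : EuclideanSpace ℝ (Fin d)) (hut : ut ∈ subdiff D g xt)
    (hne : (subdiff D g xt).Nonempty) (hcpt : IsCompact (subdiff D g xt))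
    (hinexact : ∀ y ∈ D,
      f xt1 - g xt - ⟪ut, xt1 - xt⟫ ≤ f y - g xt - ⟪ut, y - xt⟫ + ε / 2) :
    gapDC D f g xt ≤ (f xt - g xt) - (f xt1 - g xt1) + ε / 2 := by
  set R := (f xt - g xt) - (f xt1 - g xt1) + ε / 2 with hR
  -- subgradient inequality at xt1
  have hsub : g xt + ⟪ut, xt1 - xt⟫ ≤ g xt1 := hut xt1 hxt1
  have hR0 : 0 ≤ R := by
    have h1 := hinexact xt hxt
    simp only [sub_self, inner_zero_right] at h1
    -- h1 : f xt1 - g xt - ⟪ut, xt1 - xt⟫ ≤ f xt - g xt - 0 + ε/2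
    have := hsub
    rw [hR]; linarith
  rw [gapDC]
  refine Real.sSup_le (fun z hz => ?_) hR0
  obtain ⟨y, hy, rfl⟩ := hz
  -- bound the infimum by the value at ut
  have hle : sInf ((fun u => (f xt - f y - ⟪u, xt - y⟫)) '' (subdiff D g xt)) ≤
      f xt - f y - ⟪ut, xt - y⟫ := by
    have hcont : Continuous fun u : EuclideanSpace ℝ (Fin d) =>
        f xt - f y - ⟪u, xt - y⟫ := by
      exact continuous_const.sub (continuous_id.inner continuous_const)
    exact csInf_le (hcpt.image hcont).bddBelow ⟨ut, hut, rfl⟩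
  refine hle.trans ?_
  have h2 := hinexact y hy
  have hinner : ⟪ut, xt - y⟫ = -⟪ut, y - xt⟫ := by
    rw [← inner_neg_right, neg_sub]
  rw [hR, hinner]
  linarith
end

section
/- Let φ be differentiable with L-Lipschitz gradient, D convex compact, x_t ∈ D, and x_t^⋆ = proj_D(x_t - (1/L)∇φ(x_t)). Then gap_DC(x_t) ≥ (L/2)‖x_t - x_t^⋆‖², where gap_DC is computed with respect to the decomposition f(x) = (L/2)‖x‖², g(x) = (L/2)‖x‖² - φ(x); explicitly gap_DC(x_t) = max_{x ∈ D} { ⟨∇φ(x_t), x_t - x⟩ - (L/2)‖x - x_t‖² }. -/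
/-!
The projection `xs` of `xt - (1/L) ∇φ(xt)` onto `D` satisfies the variational inequality
`⟪xt - (1/L) ∇φ(xt) - xs, xt - xs⟫ ≤ 0` (as `xt ∈ D`), i.e. `L ‖xt - xs‖² ≤ ⟪∇φ(xt), xt - xs⟫`.
Hence the objective of `gap_DC` at the feasible point `xs` is already at least
`(L/2) ‖xt - xs‖²`. The supremum is a genuine one because the objective, a concave quadratic,
is bounded above by `‖∇φ(xt)‖² / (2L)` on the whole space.
-/

open scoped RealInnerProductSpace

section
variable {F : Type*} [NormedAddCommGroup F] [InnerProductSpace ℝ F]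

theorem real_inner_sub_le_zero_of_forall_norm_sub_le {K : Set F} (hK : Convex ℝ K)
    {u v w : F} (hv : v ∈ K) (hmin : ∀ y ∈ K, ‖u - v‖ ≤ ‖u - y‖) (hw : w ∈ K) :
    ⟪u - v, w - v⟫ ≤ 0 := by
  have : Nonempty K := ⟨⟨v, hv⟩⟩
  have hbdd : BddBelow (Set.range fun y : K => ‖u - y‖) :=
    ⟨0, by rintro _ ⟨y, rfl⟩; exact norm_nonneg _⟩
  have hinf : ‖u - v‖ = ⨅ y : K, ‖u - y‖ :=
    le_antisymm (le_ciInf fun y => hmin y y.2) (ciInf_le hbdd ⟨v, hv⟩)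
  exact (norm_eq_iInf_iff_real_inner_le_zero hK hv).1 hinf w hw

theorem mul_norm_sub_sq_le_inner_of_forall_norm_sub_le {K : Set F} (hK : Convex ℝ K)
    {L : ℝ} (hL : 0 < L) {g x p : F} (hx : x ∈ K) (hp : p ∈ K)
    (hmin : ∀ y ∈ K, ‖x - (1 / L) • g - p‖ ≤ ‖x - (1 / L) • g - y‖) :
    L * ‖x - p‖ ^ 2 ≤ ⟪g, x - p⟫ := by
  have hvar := real_inner_sub_le_zero_of_forall_norm_sub_le hK hp hmin hx
  have hexpand : ⟪x - (1 / L) • g - p, x - p⟫ = ‖x - p‖ ^ 2 - (1 / L) * ⟪g, x - p⟫ := by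
    rw [sub_right_comm, inner_sub_left, real_inner_smul_left, real_inner_self_eq_norm_sq]
  rw [hexpand, sub_nonpos, one_div, ← div_eq_inv_mul, le_div_iff₀ hL] at hvar
  linarith

theorem inner_sub_mul_norm_sq_le {L : ℝ} (hL : 0 < L) (g v : F) :
    ⟪g, v⟫ - L / 2 * ‖v‖ ^ 2 ≤ ‖g‖ ^ 2 / (2 * L) := by
  rw [le_div_iff₀ (by positivity)]
  nlinarith [real_inner_le_norm g v, sq_nonneg (L * ‖v‖ - ‖g‖)]

end

theorem gapDC_ge_gapPGM_general {d : ℕ} (L : ℝ) (hL : 0 < L)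
    (D : Set (EuclideanSpace ℝ (Fin d))) (hDconv : Convex ℝ D)
    (φ : EuclideanSpace ℝ (Fin d) → ℝ)
    (xt : EuclideanSpace ℝ (Fin d)) (hxt : xt ∈ D)
    (xs : EuclideanSpace ℝ (Fin d)) (hxs : xs ∈ D)
    -- `xs` is the Euclidean projection of `xt - (1/L) ∇φ(xt)` onto `D`
    (hproj : ∀ y ∈ D,
      ‖xt - (1 / L) • gradient φ xt - xs‖ ≤ ‖xt - (1 / L) • gradient φ xt - y‖) :
    L / 2 * ‖xt - xs‖ ^ 2 ≤
      ⨆ x ∈ D, (⟪gradient φ xt, xt - x⟫ - L / 2 * ‖x - xt‖ ^ 2) := by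
  have hbdd : BddAbove (⋃ x, Set.range fun _ : x ∈ D =>
      ⟪gradient φ xt, xt - x⟫ - L / 2 * ‖x - xt‖ ^ 2) := by
    refine ⟨‖gradient φ xt‖ ^ 2 / (2 * L), ?_⟩
    rintro _ ⟨_, ⟨x, rfl⟩, _, rfl⟩
    rw [norm_sub_rev x xt]
    exact inner_sub_mul_norm_sq_le hL _ _
  have hstep := mul_norm_sub_sq_le_inner_of_forall_norm_sub_le hDconv hL hxt hxs hproj
  refine le_trans ?_ (le_ciSup₂ hbdd xs hxs)
  rw [norm_sub_rev xs xt]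
  linarith

theorem gapDC_ge_gapPGM {d : ℕ} (L : ℝ) (hL : 0 < L)
    (D : Set (EuclideanSpace ℝ (Fin d))) (hDconv : Convex ℝ D) (hDcpt : IsCompact D)
    (φ : EuclideanSpace ℝ (Fin d) → ℝ) (hdiff : Differentiable ℝ φ)
    (hlip : ∀ x y, ‖gradient φ x - gradient φ y‖ ≤ L * ‖x - y‖)
    (xt : EuclideanSpace ℝ (Fin d)) (hxt : xt ∈ D)
    (xs : EuclideanSpace ℝ (Fin d)) (hxs : xs ∈ D)
    -- `xs` is the Euclidean projection of `xt - (1/L) ∇φ(xt)` onto `D`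
    (hproj : ∀ y ∈ D,
      ‖xt - (1 / L) • gradient φ xt - xs‖ ≤ ‖xt - (1 / L) • gradient φ xt - y‖) :
    L / 2 * ‖xt - xs‖ ^ 2 ≤
      ⨆ x ∈ D, (⟪gradient φ xt, xt - x⟫ - L / 2 * ‖x - xt‖ ^ 2) :=
  gapDC_ge_gapPGM_general L hL D hDconv φ xt hxt xs hxs hproj
end
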